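/- Let S be a blocking semioval with exactly 25 points in PG(2,11) such that no line meets S in more than 6 points. Suppose Q and R are distinct points of S each lying on exactly three 6-secants to S, with the line n through Q and R a 6-secant; let ℓ1, ℓ2 be the other two 6-secants through Q, let m1, m2 be the other two 6-secants through R, and let I be the set of four intersection points ℓ_i ∩ m_j for i,j ∈ {1,2}. Then at least three points of I lie in S. -/

import Mathlib

instance : Fact (Nat.Prime 11) := ⟨by norm_num⟩

/-- The points of `PG(2,11)`: the projectivization of `(ZMod 11)^3`. -/
abbrev PGPoint : Type := Projectivization (ZMod 11) (Fin 3 → ZMod 11)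

/-- The lines of `PG(2,11)`: the 2-dimensional subspaces of `(ZMod 11)^3`. -/
abbrev PGLine : Type :=
  {W : Submodule (ZMod 11) (Fin 3 → ZMod 11) // Module.finrank (ZMod 11) W = 2}

/-- Incidence: a point lies on a line when its representing 1-dimensional
subspace is contained in the line's 2-dimensional subspace. -/
def PGmem (P : PGPoint) (L : PGLine) : Prop := Projectivization.submodule P ≤ L.val

/-- The set of points lying on a line. -/
def linePts (L : PGLine) : Set PGPoint := {P | PGmem P L}

/-- The set of points of `S` lying on the line `L`. -/
def secantPts (S : Set PGPoint) (L : PGLine) : Set PGPoint := {P ∈ S | PGmem P L}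

/-- A line is a `k`-secant to `S` if it meets `S` in exactly `k` points. -/
def IsSecant (S : Set PGPoint) (k : ℕ) (L : PGLine) : Prop := (secantPts S L).ncard = k

/-- A tangent line to `S` is a 1-secant. -/
def IsTangent (S : Set PGPoint) (L : PGLine) : Prop := IsSecant S 1 L

/-- A blocking set: every line meets `S`, but `S` contains no line. -/
def IsBlockingSet (S : Set PGPoint) : Prop :=
  (∀ L : PGLine, (secantPts S L).Nonempty) ∧ ∀ L : PGLine, ¬ linePts L ⊆ S

/-- A semioval: every point of `S` lies on exactly one tangent line to `S`. -/
def IsSemioval (S : Set PGPoint) : Prop :=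
  ∀ P ∈ S, ∃! L : PGLine, PGmem P L ∧ IsTangent S L

/-- A blocking semioval is both a blocking set and a semioval. -/
def IsBlockingSemioval (S : Set PGPoint) : Prop := IsBlockingSet S ∧ IsSemioval S

/-!
Two distinct 6-secants `L`, `M` of `S` meet in a point of `S`; this gives the theorem, as the
points `lᵢ ∩ mⱼ` are pairwise distinct (no `lᵢ` passes through `R`, no `mⱼ` through `Q`).

Suppose `X = L ∩ M` is not in `S`. The 12 lines through a point `Z ∉ S` meet `S` in 25 points
altogether and each meets it (blocking), so for any set `E` of lines through `Z` at least
`2 (12 - |E|) + Σ_{ℓ ∈ E} |ℓ ∩ S| - 25` of them are tangents. Hence `X` lies on at least 7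
tangents and each of the other five points of `L \ S` on at least 3. These 22 tangents are
distinct, and by the semioval property they touch `S` in distinct points off `L`; but only
`25 - 6 = 19` points of `S` lie off `L`.
-/

open Finset Module

noncomputable instance : Fintype PGPoint := Fintype.ofFinite _

instance : Finite PGLine :=
  Finite.of_injective (fun L : PGLine => (L.val : Set (Fin 3 → ZMod 11)))
    fun _ _ h => Subtype.ext (SetLike.coe_injective h)

noncomputable instance : Fintype PGLine := Fintype.ofFinite _

open scoped Classical

lemma PGmem_iff {P : PGPoint} {L : PGLine} : PGmem P L ↔ P.rep ∈ L.val := by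
  rw [PGmem, Projectivization.submodule_eq, Submodule.span_singleton_le_iff_mem]

lemma PGmem_mk_iff {v : Fin 3 → ZMod 11} (hv : v ≠ 0) {L : PGLine} :
    PGmem (Projectivization.mk _ v hv) L ↔ v ∈ L.val := by
  rw [PGmem, Projectivization.submodule_mk, Submodule.span_singleton_le_iff_mem]

lemma existsUnique_line {P P' : PGPoint} (h : P ≠ P') :
    ∃! L : PGLine, PGmem P L ∧ PGmem P' L := by
  have hind : LinearIndependent (ZMod 11) ![P.rep, P'.rep] := by
    have e : Projectivization.rep ∘ ![P, P'] = ![P.rep, P'.rep] := by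
      ext i; fin_cases i <;> rfl
    rw [← e, ← Projectivization.independent_iff, Projectivization.independent_pair_iff_ne]
    exact h
  let N : PGLine :=
    ⟨Submodule.span _ (Set.range ![P.rep, P'.rep]), by simp [finrank_span_eq_card hind]⟩
  refine ⟨N, ?_, fun K ⟨hPK, hP'K⟩ => Subtype.ext ?_⟩
  · constructor <;> rw [PGmem_iff] <;> apply Submodule.subset_span
    exacts [⟨0, rfl⟩, ⟨1, rfl⟩]
  · refine (Submodule.eq_of_le_of_finrank_eq ?_ (by rw [N.2, K.2])).symm
    rw [Submodule.span_le, Set.range_subset_iff]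
    intro i; fin_cases i
    exacts [PGmem_iff.1 hPK, PGmem_iff.1 hP'K]

lemma PGLine.eq_of_PGmem {P P' : PGPoint} {L M : PGLine} (h : P ≠ P')
    (hPL : PGmem P L) (hP'L : PGmem P' L) (hPM : PGmem P M) (hP'M : PGmem P' M) : L = M :=
  (existsUnique_line h).unique ⟨hPL, hP'L⟩ ⟨hPM, hP'M⟩

lemma card_PGPoint : Nat.card PGPoint = 133 := by
  rw [Projectivization.card_of_finrank (ZMod 11) _ (n := 3) (by simp)]
  simp [Finset.sum_range_succ]

lemma ncard_linePts (L : PGLine) : (linePts L).ncard = 12 := by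
  have hinj := Projectivization.map_injective L.val.subtype L.val.injective_subtype
  have hrange : Set.range (Projectivization.map L.val.subtype L.val.injective_subtype) =
      linePts L := by
    ext P
    simp only [linePts, Set.mem_ofPred_eq]
    constructor
    · rintro ⟨P', rfl⟩
      induction P' using Projectivization.ind with
      | h v hv => exact (PGmem_mk_iff _).2 v.2
    · intro hP
      refine ⟨Projectivization.mk _ ⟨P.rep, PGmem_iff.1 hP⟩ ?_, ?_⟩
      · simpa using P.rep_nonzero
      · rw [Projectivization.map_mk]
        exact Projectivization.mk_rep P
  rw [← hrange, Set.ncard_range_of_injective hinj,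
    Projectivization.card_of_finrank_two _ _ L.2]
  simp

lemma card_filter_PGmem (L : PGLine) : #{P | PGmem P L} = 12 := by
  rw [← ncard_linePts L, Set.ncard_eq_toFinset_card', linePts, Set.toFinset_ofPred]

lemma card_filter_PGmem_and_PGmem {P P' : PGPoint} (h : P ≠ P') :
    #{L : PGLine | PGmem P L ∧ PGmem P' L} = 1 := by
  obtain ⟨L, hL, huniq⟩ := existsUnique_line h
  exact card_eq_one.2 ⟨L, by ext K; simpa using ⟨fun hK => huniq K hK, fun h => h ▸ hL⟩⟩

noncomputable def linesThrough (Z : PGPoint) : Finset PGLine := {L | PGmem Z L}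

lemma sum_card_filter_PGmem {Z : PGPoint} {T : Finset PGPoint} (hZ : Z ∉ T) :
    ∑ L ∈ linesThrough Z, #{P ∈ T | PGmem P L} = #T := by
  have := sum_card_bipartiteAbove_eq_sum_card_bipartiteBelow (fun L P => PGmem P L)
    (s := linesThrough Z) (t := T)
  refine this.trans ((sum_congr rfl fun P hP => ?_).trans (card_eq_sum_ones T).symm)
  rw [bipartiteBelow, linesThrough, filter_filter]
  exact card_filter_PGmem_and_PGmem (ne_of_mem_of_not_mem hP hZ).symm

lemma card_linesThrough (Z : PGPoint) : #(linesThrough Z) = 12 := by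
  have hcard : #(univ.erase Z) = 132 := by
    rw [card_erase_of_mem (mem_univ Z), card_univ, ← Nat.card_eq_fintype_card, card_PGPoint]
  have hline : ∀ L ∈ linesThrough Z, #{P ∈ univ.erase Z | PGmem P L} = 11 := fun L hL => by
    rw [filter_erase, card_erase_of_mem, card_filter_PGmem]
    simpa [linesThrough] using hL
  have := sum_card_filter_PGmem (notMem_erase Z univ)
  rw [sum_congr rfl hline, sum_const, smul_eq_mul, hcard] at this
  omega

lemma ncard_secantPts (S : Set PGPoint) (L : PGLine) :
    (secantPts S L).ncard = #{P ∈ S.toFinset | PGmem P L} := by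
  rw [Set.ncard_eq_toFinset_card', secantPts, Set.toFinset_ofPred]
  congr 1
  ext P
  simp

lemma sum_ncard_secantPts {S : Set PGPoint} {Z : PGPoint} (hZ : Z ∉ S) :
    ∑ L ∈ linesThrough Z, (secantPts S L).ncard = S.ncard := by
  simp_rw [ncard_secantPts, Set.ncard_eq_toFinset_card']
  exact sum_card_filter_PGmem (by simpa using hZ)

noncomputable def tangentsThrough (S : Set PGPoint) (Z : PGPoint) : Finset PGLine :=
  {L | PGmem Z L ∧ IsTangent S L}

lemma two_mul_card_le_sum_ncard_secantPts_add {S : Set PGPoint}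
    (hb : ∀ L : PGLine, (secantPts S L).Nonempty) (F : Finset PGLine) :
    2 * #F ≤ ∑ L ∈ F, (secantPts S L).ncard + #{L ∈ F | IsTangent S L} := by
  rw [card_filter, ← sum_add_distrib, mul_comm, ← smul_eq_mul, ← sum_const]
  refine sum_le_sum fun L _ => ?_
  have := (hb L).ncard_pos (Set.toFinite _)
  unfold IsTangent IsSecant
  split_ifs <;> omega

lemma le_ncard_add_card_tangentsThrough {S : Set PGPoint}
    (hb : ∀ L : PGLine, (secantPts S L).Nonempty) {Z : PGPoint} (hZ : Z ∉ S) {E : Finset PGLine}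
    (hE : E ⊆ linesThrough Z) :
    2 * (12 - #E) + ∑ L ∈ E, (secantPts S L).ncard ≤ S.ncard + #(tangentsThrough S Z) := by
  set F := linesThrough Z \ E
  have hF : #F = 12 - #E := by rw [card_sdiff_of_subset hE, card_linesThrough]
  have hsum :
      ∑ L ∈ F, (secantPts S L).ncard + ∑ L ∈ E, (secantPts S L).ncard = S.ncard := by
    rw [sum_sdiff hE, sum_ncard_secantPts hZ]
  have htan : #{L ∈ F | IsTangent S L} ≤ #(tangentsThrough S Z) := by
    refine card_le_card fun L hL => ?_
    simp only [F, tangentsThrough, linesThrough, mem_filter, mem_sdiff, mem_univ,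
      true_and] at hL ⊢
    exact ⟨hL.1.1, hL.2⟩
  have := two_mul_card_le_sum_ncard_secantPts_add hb F
  omega

lemma sum_card_tangentsThrough_le {S : Set PGPoint} (hS : IsSemioval S) {L : PGLine}
    (hL : ¬ IsTangent S L) :
    ∑ Z ∈ {Z | PGmem Z L ∧ Z ∉ S}, #(tangentsThrough S Z) ≤
      #{P ∈ S.toFinset | ¬ PGmem P L} := by
  have hdisj : (({Z | PGmem Z L ∧ Z ∉ S} : Finset PGPoint) : Set PGPoint).PairwiseDisjoint
      (tangentsThrough S) := by
    intro Z hZ Z' hZ' hne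
    simp only [coe_filter, mem_univ, true_and, Set.mem_ofPred_eq] at hZ hZ'
    refine disjoint_left.2 fun t ht ht' => ?_
    simp only [tangentsThrough, mem_filter, mem_univ, true_and] at ht ht'
    exact hL (PGLine.eq_of_PGmem hne ht.1 ht'.1 hZ.1 hZ'.1 ▸ ht.2)
  rw [← card_biUnion hdisj]
  refine card_le_card_of_forall_subsingleton (fun t P => PGmem P t) (fun t ht => ?_) ?_
  · simp only [mem_biUnion, tangentsThrough, mem_filter, mem_univ, true_and] at ht
    obtain ⟨Z, ⟨hZL, hZS⟩, hZt, htan⟩ := ht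
    obtain ⟨P, hP⟩ := Set.ncard_eq_one.1 htan
    have hPS : P ∈ secantPts S t := hP ▸ rfl
    refine ⟨P, ?_, hPS.2⟩
    simp only [mem_filter, Set.mem_toFinset]
    refine ⟨hPS.1, fun hPL => hL ?_⟩
    rw [← PGLine.eq_of_PGmem (ne_of_mem_of_not_mem hPS.1 hZS) hPS.2 hZt hPL hZL]
    exact htan
  · intro P hP t ⟨ht, hPt⟩ t' ⟨ht', hPt'⟩
    simp only [mem_filter, Set.mem_toFinset] at hP
    simp only [mem_biUnion, tangentsThrough, mem_filter, mem_univ, true_and] at ht ht'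
    obtain ⟨-, -, -, htan⟩ := ht
    obtain ⟨-, -, -, htan'⟩ := ht'
    exact (hS P hP.1).unique ⟨hPt, htan⟩ ⟨hPt', htan'⟩

lemma card_filter_PGmem_and_notMem_add (S : Set PGPoint) (L : PGLine) :
    #{Z | PGmem Z L ∧ Z ∉ S} + (secantPts S L).ncard = 12 := by
  rw [ncard_secantPts, ← card_filter_PGmem L,
    ← card_filter_add_card_filter_not (s := {P | PGmem P L}) (· ∈ S), add_comm, filter_filter,
    filter_filter]
  congr 2
  ext P
  simp [and_comm]

lemma card_filter_not_PGmem_add (S : Set PGPoint) (L : PGLine) :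
    #{P ∈ S.toFinset | ¬ PGmem P L} + (secantPts S L).ncard = S.ncard := by
  rw [ncard_secantPts, add_comm, card_filter_add_card_filter_not,
    Set.ncard_eq_toFinset_card']

lemma mem_of_isSecant_six_of_isSecant_six {S : Set PGPoint} (hS : IsBlockingSemioval S)
    (hcard : S.ncard = 25) {L M : PGLine} (hLM : L ≠ M) (hL : IsSecant S 6 L)
    (hM : IsSecant S 6 M) {X : PGPoint} (hXL : PGmem X L) (hXM : PGmem X M) : X ∈ S := by
  by_contra hX
  obtain ⟨⟨hb, -⟩, hsemi⟩ := hS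
  set N : Finset PGPoint := {Z | PGmem Z L ∧ Z ∉ S}
  have hXN : X ∈ N := by simp [N, hXL, hX]
  have hN : #N = 6 := by
    have : #N + 6 = 12 := hL ▸ card_filter_PGmem_and_notMem_add S L
    omega
  have hτX : 7 ≤ #(tangentsThrough S X) := by
    have := le_ncard_add_card_tangentsThrough hb hX (E := {L, M}) (by
      simp [insert_subset_iff, linesThrough, hXL, hXM])
    rw [sum_pair hLM, card_pair hLM, hL, hM, hcard] at this
    omega
  have hτN : ∀ Z ∈ N, 3 ≤ #(tangentsThrough S Z) := fun Z hZ => by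
    simp only [N, mem_filter, mem_univ, true_and] at hZ
    have := le_ncard_add_card_tangentsThrough hb hZ.2 (E := {L}) (by simp [linesThrough, hZ.1])
    rw [sum_singleton, card_singleton, hL, hcard] at this
    omega
  have hlower : 22 ≤ ∑ Z ∈ N, #(tangentsThrough S Z) := by
    rw [← add_sum_erase N _ hXN]
    have := card_nsmul_le_sum (N.erase X) _ 3 fun Z hZ => hτN Z (mem_of_mem_erase hZ)
    rw [card_erase_of_mem hXN, hN, smul_eq_mul] at this
    omega
  have hupper : ∑ Z ∈ N, #(tangentsThrough S Z) ≤ #{P ∈ S.toFinset | ¬ PGmem P L} :=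
    sum_card_tangentsThrough_le hsemi (by rw [IsTangent, IsSecant, hL]; omega)
  have := card_filter_not_PGmem_add S L
  rw [hL, hcard] at this
  omega

lemma not_PGmem_of_ne {P P' : PGPoint} {L M : PGLine} (h : P ≠ P') (hPL : PGmem P L)
    (hP'L : PGmem P' L) (hPM : PGmem P M) (hML : M ≠ L) : ¬ PGmem P' M :=
  fun hP'M => hML (PGLine.eq_of_PGmem h hPM hP'M hPL hP'L)

lemma PGPoint.eq_of_PGmem {P P' : PGPoint} {L M : PGLine} (h : L ≠ M)
    (hPL : PGmem P L) (hPM : PGmem P M) (hP'L : PGmem P' L) (hP'M : PGmem P' M) : P = P' := by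
  by_contra hne
  exact h (PGLine.eq_of_PGmem hne hPL hP'L hPM hP'M)

theorem three_points_of_I_in_S_general (S : Set PGPoint) (hS : IsBlockingSemioval S) (hcard : S.ncard = 25)
    (Q R : PGPoint) (hQR : Q ≠ R)
    (n l1 l2 m1 m2 : PGLine)
    (hn : PGmem Q n ∧ PGmem R n ∧ IsSecant S 6 n)
    (hl1 : PGmem Q l1 ∧ IsSecant S 6 l1) (hl2 : PGmem Q l2 ∧ IsSecant S 6 l2)
    (hm1 : PGmem R m1 ∧ IsSecant S 6 m1) (hm2 : PGmem R m2 ∧ IsSecant S 6 m2)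
    (hl12 : l1 ≠ l2) (hl1n : l1 ≠ n) (hl2n : l2 ≠ n)
    (hm12 : m1 ≠ m2) (hm1n : m1 ≠ n) (hm2n : m2 ≠ n)
    (A B C D : PGPoint)
    (hA : PGmem A l1 ∧ PGmem A m1) (hB : PGmem B l1 ∧ PGmem B m2)
    (hC : PGmem C l2 ∧ PGmem C m1)
    (I : Set PGPoint) (hI : I = {A, B, C, D}) :
    3 ≤ (I ∩ S).ncard := by
  obtain ⟨hQn, hRn, -⟩ := hn
  have hRl : ∀ {l}, PGmem Q l → l ≠ n → ¬ PGmem R l := not_PGmem_of_ne hQR hQn hRn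
  have hQm : ∀ {m}, PGmem R m → m ≠ n → ¬ PGmem Q m := not_PGmem_of_ne hQR.symm hRn hQn
  have hlm : ∀ {l m}, PGmem Q l → l ≠ n → PGmem R m → l ≠ m :=
    fun hQl hln hRm hl => hRl hQl hln (hl ▸ hRm)
  have hAS : A ∈ S := mem_of_isSecant_six_of_isSecant_six hS hcard (hlm hl1.1 hl1n hm1.1)
    hl1.2 hm1.2 hA.1 hA.2
  have hBS : B ∈ S := mem_of_isSecant_six_of_isSecant_six hS hcard (hlm hl1.1 hl1n hm2.1)
    hl1.2 hm2.2 hB.1 hB.2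
  have hCS : C ∈ S := mem_of_isSecant_six_of_isSecant_six hS hcard (hlm hl2.1 hl2n hm1.1)
    hl2.2 hm1.2 hC.1 hC.2
  have hAB : A ≠ B := fun h =>
    hRl hl1.1 hl1n (PGPoint.eq_of_PGmem hm12 hA.2 (h ▸ hB.2) hm1.1 hm2.1 ▸ hA.1)
  have hAC : A ≠ C := fun h =>
    hQm hm1.1 hm1n (PGPoint.eq_of_PGmem hl12 hA.1 (h ▸ hC.1) hl1.1 hl2.1 ▸ hA.2)
  have hBC : B ≠ C := fun h =>
    hQm hm2.1 hm2n (PGPoint.eq_of_PGmem hl12 hB.1 (h ▸ hC.1) hl1.1 hl2.1 ▸ hB.2)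
  calc 3 = ({A, B, C} : Set PGPoint).ncard :=
        (Set.ncard_eq_three.2 ⟨A, B, C, hAB, hAC, hBC, rfl⟩).symm
    _ ≤ (I ∩ S).ncard :=
        Set.ncard_le_ncard (by rw [hI]; rintro P (rfl | rfl | rfl) <;> simp [*])

theorem three_points_of_I_in_S (S : Set PGPoint) (hS : IsBlockingSemioval S) (hcard : S.ncard = 25)
    (hmax : ∀ L : PGLine, (secantPts S L).ncard ≤ 6)
    (Q R : PGPoint) (hQ : Q ∈ S) (hR : R ∈ S) (hQR : Q ≠ R)
    (hQ3 : ({L : PGLine | PGmem Q L ∧ IsSecant S 6 L}).ncard = 3)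
    (hR3 : ({L : PGLine | PGmem R L ∧ IsSecant S 6 L}).ncard = 3)
    (n l1 l2 m1 m2 : PGLine)
    (hn : PGmem Q n ∧ PGmem R n ∧ IsSecant S 6 n)
    (hl1 : PGmem Q l1 ∧ IsSecant S 6 l1) (hl2 : PGmem Q l2 ∧ IsSecant S 6 l2)
    (hm1 : PGmem R m1 ∧ IsSecant S 6 m1) (hm2 : PGmem R m2 ∧ IsSecant S 6 m2)
    (hl12 : l1 ≠ l2) (hl1n : l1 ≠ n) (hl2n : l2 ≠ n)
    (hm12 : m1 ≠ m2) (hm1n : m1 ≠ n) (hm2n : m2 ≠ n)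
    (A B C D : PGPoint)
    (hA : PGmem A l1 ∧ PGmem A m1) (hB : PGmem B l1 ∧ PGmem B m2)
    (hC : PGmem C l2 ∧ PGmem C m1) (hD : PGmem D l2 ∧ PGmem D m2)
    (I : Set PGPoint) (hI : I = {A, B, C, D}) :
    3 ≤ (I ∩ S).ncard :=
  three_points_of_I_in_S_general S hS hcard Q R hQR n l1 l2 m1 m2 hn hl1 hl2 hm1 hm2 hl12 hl1n hl2n
    hm12 hm1n hm2n A B C D hA hB hC I hI
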